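/- Let a < b be real numbers and let f : ℝ → ℝ be twice differentiable on an open interval containing [a,b] with f'' Lebesgue integrable on [a,b]. Let p, q > 1 satisfy 1/p + 1/q = 1. If the function x ↦ |f''(x)|^q is convex on [a,b] and f'(a) = f'(b), then |(1/(b−a))·∫_a^b f(x) dx − (f(a)+f(b))/2| ≤ ((b−a)²/(16·(2p+1)^(1/p))) · ( ((|f''(a)|^q + 3·|f''(b)|^q)/4)^(1/q) + ((3·|f''(a)|^q + |f''(b)|^q)/4)^(1/q) ). -/

import Mathlib

/-!
With `m = (a + b) / 2`, two integrations by parts give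
`∫ f - (b - a) (f a + f b) / 2 = ½ ∫ (x - m)² f'' - (b - a)² (f' b - f' a) / 8`,
so under `f' a = f' b` the trapezoid error is `(1 / (2 (b - a))) ∫ (x - m)² f''`.
Split this integral at `m` and apply Hölder's inequality on each half with the weight `(x - m)²`:
the weight contributes `((b - a) / 2)^(2p+1) / (2p + 1)`, while convexity bounds `|f''|^q` by its
chord, whose mean over the left (right) half is `(3 |f'' a|^q + |f'' b|^q) / 4`
(resp. `(|f'' a|^q + 3 |f'' b|^q) / 4`).
-/

open MeasureTheory Set

theorem integral_sub_trapezoid_eq {f f' f'' : ℝ → ℝ} {a b : ℝ}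
    (hf : ∀ x ∈ uIcc a b, HasDerivAt f (f' x) x) (hf' : ∀ x ∈ uIcc a b, HasDerivAt f' (f'' x) x)
    (hf'' : IntervalIntegrable f'' volume a b) :
    (∫ x in a..b, f x) - (b - a) * (f a + f b) / 2 =
      (∫ x in a..b, (x - (a + b) / 2) ^ 2 * f'' x) / 2 - (b - a) ^ 2 * (f' b - f' a) / 8 := by
  set m := (a + b) / 2 with hm
  have hf'_cont : ContinuousOn f' (uIcc a b) := fun x hx =>
    (hf' x hx).continuousAt.continuousWithinAt
  have parts₂ : ∫ x in a..b, (x - m) ^ 2 * f'' x =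
      (b - m) ^ 2 * f' b - (a - m) ^ 2 * f' a - ∫ x in a..b, 2 * (x - m) * f' x :=
    intervalIntegral.integral_mul_deriv_eq_deriv_mul
      (fun x _ => by simpa using ((hasDerivAt_id x).sub_const m).fun_pow 2) hf'
      ((by fun_prop : Continuous fun x => 2 * (x - m)).intervalIntegrable _ _) hf''
  have parts₁ : ∫ x in a..b, 2 * (x - m) * f' x =
      2 * (b - m) * f b - 2 * (a - m) * f a - ∫ x in a..b, 2 * f x :=
    intervalIntegral.integral_mul_deriv_eq_deriv_mul
      (fun x _ => by simpa using ((hasDerivAt_id x).sub_const m).const_mul 2) hf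
      intervalIntegrable_const hf'_cont.intervalIntegrable
  rw [parts₂, parts₁, intervalIntegral.integral_const_mul, hm]
  ring

theorem ConvexOn.le_chord {φ : ℝ → ℝ} {a b x : ℝ} (hφ : ConvexOn ℝ (Icc a b) φ) (hab : a < b)
    (hx : x ∈ Icc a b) : φ x ≤ (φ b - φ a) / (b - a) * (x - a) + φ a := by
  have hba : 0 < b - a := sub_pos.2 hab
  have key := hφ.2 (left_mem_Icc.2 hab.le) (right_mem_Icc.2 hab.le)
    (div_nonneg (sub_nonneg.2 hx.2) hba.le) (div_nonneg (sub_nonneg.2 hx.1) hba.le)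
    (by field_simp; ring)
  calc φ x = φ (((b - x) / (b - a)) • a + ((x - a) / (b - a)) • b) := by
        congr 1; simp only [smul_eq_mul]; field_simp; ring
    _ ≤ _ := key
    _ = _ := by simp only [smul_eq_mul]; field_simp; ring

theorem integral_mul_sub_add_const (α β c d e : ℝ) :
    ∫ x in c..d, (α * (x - e) + β) = (d - c) * (α * ((c + d) / 2 - e) + β) := by
  have hint : IntervalIntegrable (fun x => α * (x - e)) volume c d :=
    (by fun_prop : Continuous fun x => α * (x - e)).intervalIntegrable _ _
  rw [intervalIntegral.integral_add hint intervalIntegrable_const,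
    intervalIntegral.integral_const_mul, intervalIntegral.integral_comp_sub_right (fun x => x),
    integral_id, intervalIntegral.integral_const, smul_eq_mul]
  ring

theorem ConvexOn.intervalIntegral_le_chord {φ : ℝ → ℝ} {a b c d : ℝ}
    (hφ : ConvexOn ℝ (Icc a b) φ) (hab : a < b) (hac : a ≤ c) (hcd : c ≤ d) (hdb : d ≤ b)
    (hint : IntervalIntegrable φ volume c d) :
    ∫ x in c..d, φ x ≤ (d - c) * ((φ b - φ a) / (b - a) * ((c + d) / 2 - a) + φ a) := by
  rw [← integral_mul_sub_add_const]
  have hchord : Continuous fun x => (φ b - φ a) / (b - a) * (x - a) + φ a := by fun_prop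
  exact intervalIntegral.integral_mono_on hcd hint (hchord.intervalIntegrable _ _) fun x hx =>
    hφ.le_chord hab ⟨hac.trans hx.1, hx.2.trans hdb⟩

theorem memLp_restrict_Ioc_of_abs_le {g : ℝ → ℝ} {c d M : ℝ} {r : ENNReal}
    (hg : AEStronglyMeasurable g (volume.restrict (Ioc c d))) (hM : ∀ x ∈ Ioc c d, |g x| ≤ M) :
    MemLp g r (volume.restrict (Ioc c d)) :=
  have : IsFiniteMeasure (volume.restrict (Ioc c d)) :=
    isFiniteMeasure_restrict.2 measure_Ioc_lt_top.ne
  MemLp.of_bound hg M (ae_restrict_of_forall_mem measurableSet_Ioc hM)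

theorem integral_abs_sub_left_rpow {c d r : ℝ} (hcd : c ≤ d) (hr : -1 < r) :
    ∫ x in c..d, |x - c| ^ r = (d - c) ^ (r + 1) / (r + 1) := by
  rw [intervalIntegral.integral_congr (g := fun x => (x - c) ^ r) fun x hx => by
      rw [uIcc_of_le hcd] at hx; simp only [abs_of_nonneg (sub_nonneg.2 hx.1)],
    intervalIntegral.integral_comp_sub_right (fun x => x ^ r), sub_self,
    integral_rpow (Or.inl hr), Real.zero_rpow (by linarith), sub_zero]

theorem integral_abs_sub_right_rpow {c d r : ℝ} (hcd : c ≤ d) (hr : -1 < r) :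
    ∫ x in c..d, |x - d| ^ r = (d - c) ^ (r + 1) / (r + 1) := by
  rw [intervalIntegral.integral_congr (g := fun x => (d - x) ^ r) fun x hx => by
      rw [uIcc_of_le hcd] at hx; simp only [abs_sub_comm x, abs_of_nonneg (sub_nonneg.2 hx.2)],
    intervalIntegral.integral_comp_sub_left (fun x => x ^ r), sub_self,
    integral_rpow (Or.inl hr), Real.zero_rpow (by linarith), sub_zero]

theorem intervalIntegral.integral_mul_le_Lp_mul_Lq_of_nonneg {p q c d : ℝ}
    (hpq : p.HolderConjugate q) (hcd : c ≤ d) {f g : ℝ → ℝ}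
    (hf0 : ∀ x ∈ Ioc c d, 0 ≤ f x) (hg0 : ∀ x ∈ Ioc c d, 0 ≤ g x)
    (hf : MemLp f (ENNReal.ofReal p) (volume.restrict (Ioc c d)))
    (hg : MemLp g (ENNReal.ofReal q) (volume.restrict (Ioc c d))) :
    ∫ x in c..d, f x * g x ≤
      (∫ x in c..d, f x ^ p) ^ (1 / p) * (∫ x in c..d, g x ^ q) ^ (1 / q) := by
  simp only [intervalIntegral.integral_of_le hcd]
  exact MeasureTheory.integral_mul_le_Lp_mul_Lq_of_nonneg hpq
    (ae_restrict_of_forall_mem measurableSet_Ioc hf0)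
    (ae_restrict_of_forall_mem measurableSet_Ioc hg0) hf hg

theorem integral_sq_sub_mul_abs_le {g : ℝ → ℝ} {p q c d e C : ℝ} (hpq : p.HolderConjugate q)
    (hcd : c ≤ d) (hC : 0 ≤ C) (hg : MemLp g (ENNReal.ofReal q) (volume.restrict (Ioc c d)))
    (hK : ∫ x in c..d, |x - e| ^ (2 * p) = (d - c) ^ (2 * p + 1) / (2 * p + 1))
    (hgq : ∫ x in c..d, |g x| ^ q ≤ (d - c) * C) :
    ∫ x in c..d, (x - e) ^ 2 * |g x| ≤ (d - c) ^ 3 / (2 * p + 1) ^ (1 / p) * C ^ (1 / q) := by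
  have hL : 0 ≤ d - c := sub_nonneg.2 hcd
  have hp := hpq.pos
  obtain ⟨M, hM⟩ := isCompact_Icc.exists_bound_of_continuousOn (s := Icc c d)
    (by fun_prop : Continuous fun x => (x - e) ^ 2).continuousOn
  have hKmem : MemLp (fun x => (x - e) ^ 2) (ENNReal.ofReal p) (volume.restrict (Ioc c d)) :=
    memLp_restrict_Ioc_of_abs_le (by fun_prop) fun x hx => hM x (Ioc_subset_Icc_self hx)
  have hKp : ∫ x in c..d, ((x - e) ^ 2) ^ p = ∫ x in c..d, |x - e| ^ (2 * p) :=
    intervalIntegral.integral_congr fun x _ => by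
      rw [← sq_abs, ← Real.rpow_natCast, ← Real.rpow_mul (abs_nonneg _), Nat.cast_ofNat]
  have hexp : (2 * p + 1) * (1 / p) + 1 / q = 3 := by
    have := hpq.inv_add_inv_eq_one
    field_simp at this ⊢
    linarith
  calc ∫ x in c..d, (x - e) ^ 2 * |g x|
      ≤ (∫ x in c..d, ((x - e) ^ 2) ^ p) ^ (1 / p) * (∫ x in c..d, |g x| ^ q) ^ (1 / q) :=
        intervalIntegral.integral_mul_le_Lp_mul_Lq_of_nonneg hpq hcd (fun x _ => sq_nonneg _)
          (fun x _ => abs_nonneg _) hKmem hg.abs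
    _ ≤ ((d - c) ^ (2 * p + 1) / (2 * p + 1)) ^ (1 / p) * ((d - c) * C) ^ (1 / q) := by
        rw [hKp, hK]
        gcongr
        · exact intervalIntegral.integral_nonneg hcd fun x _ => by positivity
        · exact hpq.symm.one_div_nonneg
    _ = (d - c) ^ ((2 * p + 1) * (1 / p) + 1 / q) / (2 * p + 1) ^ (1 / p) * C ^ (1 / q) := by
        rw [Real.div_rpow (by positivity) (by positivity), ← Real.rpow_mul hL, Real.mul_rpow hL hC,
          Real.rpow_add' hL (by rw [hexp]; norm_num)]
        ring
    _ = (d - c) ^ 3 / (2 * p + 1) ^ (1 / p) * C ^ (1 / q) := by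
        rw [hexp]; norm_cast

theorem abs_integral_sq_sub_mul_le_add {g : ℝ → ℝ} {a b m : ℝ} (ham : a ≤ m) (hmb : m ≤ b)
    (hg : IntervalIntegrable g volume a b) :
    |∫ x in a..b, (x - m) ^ 2 * g x| ≤
      (∫ x in a..m, (x - m) ^ 2 * |g x|) + ∫ x in m..b, (x - m) ^ 2 * |g x| := by
  have hm : m ∈ uIcc a b := mem_uIcc_of_le ham hmb
  have hprod : IntervalIntegrable (fun x => (x - m) ^ 2 * g x) volume a b :=
    hg.continuousOn_mul (by fun_prop)
  have habs : ∀ {c d}, c ≤ d →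
      |∫ x in c..d, (x - m) ^ 2 * g x| ≤ ∫ x in c..d, (x - m) ^ 2 * |g x| := fun hcd =>
    (intervalIntegral.abs_integral_le_integral_abs hcd).trans_eq <|
      intervalIntegral.integral_congr fun x _ => by rw [abs_mul, abs_sq]
  rw [← intervalIntegral.integral_add_adjacent_intervals
    (hprod.mono_set (uIcc_subset_uIcc_left hm)) (hprod.mono_set (uIcc_subset_uIcc_right hm))]
  exact (abs_add_le _ _).trans (add_le_add (habs ham) (habs hmb))

theorem memLp_restrict_Ioc_of_convexOn_abs_rpow {g : ℝ → ℝ} {a b q : ℝ} {r : ENNReal} (hab : a ≤ b)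
    (hq : 0 < q) (hg : IntervalIntegrable g volume a b)
    (hconv : ConvexOn ℝ (Icc a b) fun x => |g x| ^ q) :
    MemLp g r (volume.restrict (Ioc a b)) :=
  memLp_restrict_Ioc_of_abs_le (M := max (|g a| ^ q) (|g b| ^ q) ^ q⁻¹) hg.1.aestronglyMeasurable
    fun x hx =>
      (Real.le_rpow_inv_iff_of_pos (abs_nonneg _) (le_max_of_le_left (by positivity)) hq).2 <|
      hconv.le_on_segment (left_mem_Icc.2 hab) (right_mem_Icc.2 hab)
        (by rw [segment_eq_Icc hab]; exact Ioc_subset_Icc_self hx)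

theorem abs_integral_sq_sub_midpoint_mul_le {g : ℝ → ℝ} {a b p q : ℝ} (hab : a < b)
    (hpq : p.HolderConjugate q) (hg : IntervalIntegrable g volume a b)
    (hconv : ConvexOn ℝ (Icc a b) fun x => |g x| ^ q) :
    |∫ x in a..b, (x - (a + b) / 2) ^ 2 * g x| ≤
      ((b - a) / 2) ^ 3 / (2 * p + 1) ^ (1 / p) *
        (((|g a| ^ q + 3 * |g b| ^ q) / 4) ^ (1 / q) +
          ((3 * |g a| ^ q + |g b| ^ q) / 4) ^ (1 / q)) := by
  set m := (a + b) / 2 with hm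
  set A := |g a| ^ q
  set B := |g b| ^ q
  have hba : b - a ≠ 0 := (sub_pos.2 hab).ne'
  have ham : a ≤ m := by linarith
  have hmb : m ≤ b := by linarith
  have hm_mem : m ∈ uIcc a b := mem_uIcc_of_le ham hmb
  have hr : -1 < 2 * p := by linarith [hpq.pos]
  have hmem : MemLp g (ENNReal.ofReal q) (volume.restrict (Ioc a b)) :=
    memLp_restrict_Ioc_of_convexOn_abs_rpow hab.le hpq.symm.pos hg hconv
  have hgq : IntervalIntegrable (fun x => |g x| ^ q) volume a b := by
    have := hmem.integrable_norm_rpow'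
    simp only [Real.norm_eq_abs, ENNReal.toReal_ofReal hpq.symm.nonneg] at this
    exact (intervalIntegrable_iff_integrableOn_Ioc_of_le hab.le).2 this
  have hleft : ∫ x in a..m, |g x| ^ q ≤ (m - a) * ((3 * A + B) / 4) :=
    (hconv.intervalIntegral_le_chord hab le_rfl ham hmb
      (hgq.mono_set (uIcc_subset_uIcc_left hm_mem))).trans_eq (by rw [hm]; field_simp; ring)
  have hright : ∫ x in m..b, |g x| ^ q ≤ (b - m) * ((A + 3 * B) / 4) :=
    (hconv.intervalIntegral_le_chord hab ham hmb le_rfl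
      (hgq.mono_set (uIcc_subset_uIcc_right hm_mem))).trans_eq (by rw [hm]; field_simp; ring)
  calc |∫ x in a..b, (x - m) ^ 2 * g x|
      ≤ (∫ x in a..m, (x - m) ^ 2 * |g x|) + ∫ x in m..b, (x - m) ^ 2 * |g x| :=
        abs_integral_sq_sub_mul_le_add ham hmb hg
    _ ≤ (m - a) ^ 3 / (2 * p + 1) ^ (1 / p) * ((3 * A + B) / 4) ^ (1 / q) +
          (b - m) ^ 3 / (2 * p + 1) ^ (1 / p) * ((A + 3 * B) / 4) ^ (1 / q) :=
        add_le_add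
          (integral_sq_sub_mul_abs_le hpq ham (by positivity)
            (hmem.mono_measure (Measure.restrict_mono (Ioc_subset_Ioc le_rfl hmb) le_rfl))
            (integral_abs_sub_right_rpow ham hr) hleft)
          (integral_sq_sub_mul_abs_le hpq hmb (by positivity)
            (hmem.mono_measure (Measure.restrict_mono (Ioc_subset_Ioc ham le_rfl) le_rfl))
            (integral_abs_sub_left_rpow hmb hr) hright)
    _ = _ := by rw [hm]; ring

theorem stmt_6_general (f f' f'' : ℝ → ℝ) (a b u v p q : ℝ) (hab : a < b)
(hua : u < a) (hbv : b < v)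
    (hf' : ∀ x ∈ Set.Ioo u v, HasDerivAt f (f' x) x)
    (hf'' : ∀ x ∈ Set.Ioo u v, HasDerivAt f' (f'' x) x)
    (hint : IntervalIntegrable f'' MeasureTheory.volume a b)
    (hp : 1 < p) (hpq : 1 / p + 1 / q = 1)
    (hconv : ConvexOn ℝ (Set.Icc a b) (fun x => |f'' x| ^ q))
    (hder : f' a = f' b) :
    |(1 / (b - a)) * (∫ x in a..b, f x) - (f a + f b) / 2|
      ≤ ((b - a) ^ 2 / (16 * (2 * p + 1) ^ (1 / p))) *
          (((|f'' a| ^ q + 3 * |f'' b| ^ q) / 4) ^ (1 / q)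
            + ((3 * |f'' a| ^ q + |f'' b| ^ q) / 4) ^ (1 / q)) := by
  have hba : 0 < b - a := sub_pos.2 hab
  have hsub : uIcc a b ⊆ Ioo u v := by rw [uIcc_of_le hab.le]; exact Icc_subset_Ioo hua hbv
  have hpq' : p.HolderConjugate q :=
    Real.holderConjugate_iff.2 ⟨hp, by simpa only [one_div] using hpq⟩
  have hid := integral_sub_trapezoid_eq (fun x hx => hf' x (hsub hx))
    (fun x hx => hf'' x (hsub hx)) hint
  rw [hder, sub_self, mul_zero, zero_div, sub_zero] at hid
  calc |(1 / (b - a)) * (∫ x in a..b, f x) - (f a + f b) / 2|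
      = |∫ x in a..b, (x - (a + b) / 2) ^ 2 * f'' x| / (2 * (b - a)) := by
        rw [← abs_of_pos (by positivity : 0 < 2 * (b - a)), ← abs_div, ← div_div, ← hid]
        congr 1
        field_simp
    _ ≤ ((b - a) / 2) ^ 3 / (2 * p + 1) ^ (1 / p) * (((|f'' a| ^ q + 3 * |f'' b| ^ q) / 4) ^ (1 / q)
          + ((3 * |f'' a| ^ q + |f'' b| ^ q) / 4) ^ (1 / q)) / (2 * (b - a)) := by
        gcongr
        exact abs_integral_sq_sub_midpoint_mul_le hab hpq' hint hconv
    _ = _ := by field_simp; ring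

/-- Corollary: trapezoid Hölder-type inequality for |f''|^q convex,
assuming f'(a) = f'(b). -/
theorem stmt_6 (f f' f'' : ℝ → ℝ) (a b u v p q : ℝ) (hab : a < b)
(hua : u < a) (hbv : b < v)
    (hf' : ∀ x ∈ Set.Ioo u v, HasDerivAt f (f' x) x)
    (hf'' : ∀ x ∈ Set.Ioo u v, HasDerivAt f' (f'' x) x)
    (hint : IntervalIntegrable f'' MeasureTheory.volume a b)
    (hp : 1 < p) (hq : 1 < q) (hpq : 1 / p + 1 / q = 1)
    (hconv : ConvexOn ℝ (Set.Icc a b) (fun x => |f'' x| ^ q))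
    (hder : f' a = f' b) :
    |(1 / (b - a)) * (∫ x in a..b, f x) - (f a + f b) / 2|
      ≤ ((b - a) ^ 2 / (16 * (2 * p + 1) ^ (1 / p))) *
          (((|f'' a| ^ q + 3 * |f'' b| ^ q) / 4) ^ (1 / q)
            + ((3 * |f'' a| ^ q + |f'' b| ^ q) / 4) ^ (1 / q)) :=
  stmt_6_general f f' f'' a b u v p q hab hua hbv hf' hf'' hint hp hpq hconv hder
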